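/- The eigenvalues of the FTCS heat equation matrix M (tridiagonal with diagonal 1−2r and off-diagonals r) are λ_i = 1 − 4r·sin²(iπ/(2(N+1))) for i = 1,...,N. -/

import Mathlib

open Real

/-- The `N×N` tridiagonal matrix with constant diagonal `b` and off-diagonals `a`. -/
def triDiag (N : ℕ) (a b : ℝ) : Matrix (Fin N) (Fin N) ℝ :=
  Matrix.of fun k l =>
    if k = l then b else if (k : ℕ) + 1 = (l : ℕ) ∨ (l : ℕ) + 1 = (k : ℕ) then a else 0

/-!
The vector `l ↦ sin ((l + 1) θ)` is an eigenvector of `triDiag N a b` with eigenvalue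
`b + 2 a cos θ` as soon as `sin ((N + 1) θ) = 0`: in the interior rows this is
`sin (l θ) + sin ((l + 2) θ) = 2 cos θ sin ((l + 1) θ)`, and the two boundary rows are the same
identity because the missing neighbours `sin 0` and `sin ((N + 1) θ)` vanish. The angles
`θ_k = kπ/(N + 1)`, `k = 1, …, N`, lie in `(0, π)`, where `cos` is injective, so for `a ≠ 0`
they give `N` distinct eigenvalues, which exhaust the spectrum since the characteristic
polynomial has degree `N`. Finally `1 - 2r + 2r cos θ = 1 - 4r sin² (θ/2)`.
-/

open Finset Matrix

theorem Matrix.mem_spectrum_of_mulVec_eq_smul {K n : Type*} [Field K] [Fintype n] [DecidableEq n]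
    {A : Matrix n n K} {v : n → K} {μ : K} (hv : v ≠ 0) (h : A *ᵥ v = μ • v) :
    μ ∈ spectrum K A := by
  rw [← spectrum_toLin', ← Module.End.hasEigenvalue_iff_mem_spectrum]
  exact Module.End.hasEigenvalue_of_hasEigenvector
    ⟨Module.End.mem_eigenspace_iff.2 (by rwa [toLin'_apply]), hv⟩

theorem Matrix.spectrum_eq_range_of_injective {K n : Type*} [Field K] [Fintype n] [DecidableEq n]
    (A : Matrix n n K) {μ : n → K} (hinj : Function.Injective μ) (hμ : ∀ i, μ i ∈ spectrum K A) :
    spectrum K A = Set.range μ := by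
  classical
  have hroots : ∀ x, x ∈ spectrum K A ↔ x ∈ A.charpoly.roots.toFinset := by
    simp [mem_spectrum_iff_isRoot_charpoly, A.charpoly_monic.ne_zero]
  have hsub : univ.image μ ⊆ A.charpoly.roots.toFinset := by
    simpa [subset_iff, ← hroots] using hμ
  have hcard : A.charpoly.roots.toFinset.card ≤ (univ.image μ).card :=
    calc _ ≤ A.charpoly.roots.card := Multiset.toFinset_card_le _
      _ ≤ A.charpoly.natDegree := Polynomial.card_roots' _
      _ = (univ.image μ).card := by
        rw [charpoly_natDegree_eq_dim, card_image_of_injective _ hinj, card_univ]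
  ext x
  rw [hroots, ← eq_of_subset_of_card_le hsub hcard]
  simp

theorem Finset.sum_range_ite_succ_eq {M : Type*} [AddCommMonoid M] {N k : ℕ} {w : ℕ → M}
    (h0 : w 0 = 0) (hN : w (N + 1) = 0) (hk : k < N + 2) :
    ∑ l ∈ range N, (if l + 1 = k then w (l + 1) else 0) = w k := by
  calc _ = ∑ m ∈ range (N + 2), (if m = k then w m else 0) := by
        rw [sum_range_succ', sum_range_succ]
        simp [h0, hN]
    _ = w k := by simp [hk]

theorem triDiag_mulVec_apply {N : ℕ} (a b : ℝ) {w : ℕ → ℝ} (h0 : w 0 = 0) (hN : w (N + 1) = 0)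
    (j : Fin N) :
    (triDiag N a b *ᵥ fun l => w (l + 1)) j = a * w j + b * w (j + 1) + a * w (j + 2) := by
  have hentry : ∀ l : Fin N, triDiag N a b j l * w (l + 1) =
      a * (if (l : ℕ) + 1 = j then w (l + 1) else 0) +
      b * (if (l : ℕ) + 1 = j + 1 then w (l + 1) else 0) +
      a * (if (l : ℕ) + 1 = j + 2 then w (l + 1) else 0) := by
    intro l
    simp only [triDiag, of_apply, Fin.ext_iff]
    split_ifs <;> first | (exfalso; omega) | ring1
  simp only [mulVec, dotProduct, hentry, sum_add_distrib, ← mul_sum]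
  rw [Fin.sum_univ_eq_sum_range (fun l => if l + 1 = j then w (l + 1) else 0),
    Fin.sum_univ_eq_sum_range (fun l => if l + 1 = j + 1 then w (l + 1) else 0),
    Fin.sum_univ_eq_sum_range (fun l => if l + 1 = j + 2 then w (l + 1) else 0)]
  rw [sum_range_ite_succ_eq h0 hN (by omega), sum_range_ite_succ_eq h0 hN (by omega),
    sum_range_ite_succ_eq h0 hN (by omega)]

theorem triDiag_mulVec_sin (N : ℕ) (a b θ : ℝ) (hθ : sin ((N + 1) * θ) = 0) :
    triDiag N a b *ᵥ (fun l : Fin N => sin ((l + 1) * θ)) =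
      (b + 2 * a * cos θ) • fun l : Fin N => sin ((l + 1) * θ) := by
  ext j
  have h := triDiag_mulVec_apply a b (w := fun m => sin (m * θ)) (by simp) (by simpa using hθ) j
  push_cast at h
  rw [h, Pi.smul_apply, smul_eq_mul, show (j : ℝ) * θ = (j + 1) * θ - θ by ring,
    show ((j : ℝ) + 2) * θ = (j + 1) * θ + θ by ring, sin_sub, sin_add]
  ring

theorem succ_mul_pi_div_succ_mem_Ioo {N : ℕ} (k : Fin N) :
    ((k : ℕ) + 1) * π / (N + 1) ∈ Set.Ioo 0 π := by
  have hk : ((k : ℕ) : ℝ) + 1 < N + 1 := by exact_mod_cast Nat.succ_lt_succ k.isLt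
  constructor
  · positivity
  · rw [div_lt_iff₀ (by positivity)]
    nlinarith [pi_pos]

theorem triDiag_eigenvalue_mem_spectrum (a b : ℝ) {N : ℕ} (k : Fin N) :
    b + 2 * a * cos (((k : ℕ) + 1) * π / (N + 1)) ∈ spectrum ℝ (triDiag N a b) := by
  have hθ : sin ((N + 1) * (((k : ℕ) + 1) * π / (N + 1))) = 0 := by
    rw [mul_div_cancel₀ _ (by positivity)]
    exact_mod_cast sin_nat_mul_pi (k + 1)
  refine mem_spectrum_of_mulVec_eq_smul (fun hv => ?_) (triDiag_mulVec_sin N a b _ hθ)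
  have h0 := congrFun hv ⟨0, k.pos⟩
  simp only [Nat.cast_zero, zero_add, one_mul, Pi.zero_apply] at h0
  obtain ⟨hpos, hlt⟩ := succ_mul_pi_div_succ_mem_Ioo k
  exact (sin_pos_of_pos_of_lt_pi hpos hlt).ne' h0

theorem cos_succ_mul_pi_div_succ_injective (N : ℕ) :
    Function.Injective fun k : Fin N => cos (((k : ℕ) + 1) * π / (N + 1)) := by
  intro k l h
  have h' := injOn_cos (Set.Ioo_subset_Icc_self (succ_mul_pi_div_succ_mem_Ioo k))
    (Set.Ioo_subset_Icc_self (succ_mul_pi_div_succ_mem_Ioo l)) h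
  field_simp at h'
  exact Fin.ext (by exact_mod_cast add_right_cancel h')

theorem spectrum_triDiag (N : ℕ) {a : ℝ} (b : ℝ) (ha : a ≠ 0) :
    spectrum ℝ (triDiag N a b) =
      Set.range fun k : Fin N => b + 2 * a * cos (((k : ℕ) + 1) * π / (N + 1)) :=
  spectrum_eq_range_of_injective _
    ((add_right_injective b).comp ((mul_right_injective₀ (mul_ne_zero two_ne_zero ha)).comp
      (cos_succ_mul_pi_div_succ_injective N)))
    (triDiag_eigenvalue_mem_spectrum a b)

theorem one_sub_four_mul_sin_sq_half (r θ : ℝ) :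
    1 - 4 * r * sin (θ / 2) ^ 2 = 1 - 2 * r + 2 * r * cos θ := by
  rw [sin_sq_eq_half_sub, mul_div_cancel₀ θ two_ne_zero]
  ring

/-- The eigenvalues of the FTCS heat matrix (tridiagonal, diagonal `1-2r`, off-diagonals `r`)
are exactly `λ_i = 1 - 4r sin²(iπ/(2(N+1)))`, `i = 1, …, N`. -/
theorem ftcs_heat_spectrum (N : ℕ) (r : ℝ) (hr : 0 < r) :
    spectrum ℝ (triDiag N r (1 - 2 * r)) =
      {x : ℝ | ∃ i : Fin N, x = 1 - 4 * r * sin (((i : ℕ) + 1) * π / (2 * (N + 1))) ^ 2} := by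
  rw [spectrum_triDiag N _ hr.ne']
  ext x
  refine exists_congr fun k => ?_
  rw [eq_comm, show ((k : ℕ) + 1) * π / (2 * (N + 1)) = ((k : ℕ) + 1) * π / (N + 1) / 2 by
      rw [div_div, mul_comm (2 : ℝ)],
    one_sub_four_mul_sin_sq_half]
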